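/- Let a, n be positive integers with 1 ≤ a < n and gcd(a,n) = 1. Then V(a,n) + 1 = Σ_{s=1}^{a} #{k ∈ ℤ : (s−1)·n < a·k ≤ s·n and gcd(s,k) = 1}. (The extra 1 on the left accounts for the vertex (a,n), which is visible but lies on the boundary of P_{a,n}; the s-th summand counts the visible lattice points with first coordinate s among the points (⌈k·a/n⌉, k), k = 1, …, n.) -/

import Mathlib

/-- `(x, y) ∈ ℤ²` lies in the interior of the lattice parallelogram
`P_{a,n} = {t₁·(1,0) + t₂·(a,n) : 0 ≤ t₁, t₂ ≤ 1}`. -/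
def inInteriorP (a n : ℤ) (p : ℤ × ℤ) : Prop :=
  ∃ t₁ t₂ : ℝ, 0 < t₁ ∧ t₁ < 1 ∧ 0 < t₂ ∧ t₂ < 1 ∧
    (p.1 : ℝ) = t₁ + t₂ * (a : ℝ) ∧ (p.2 : ℝ) = t₂ * (n : ℝ)

/-- A lattice point `(x, y) ∈ ℤ²` is visible (from the origin) if `gcd(x, y) = 1`. -/
def VisiblePt (p : ℤ × ℤ) : Prop := Int.gcd p.1 p.2 = 1

/-- `V a n` is the number of visible lattice points in the interior of `P_{a,n}`. -/
noncomputable def V (a n : ℤ) : ℕ :=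
  {p : ℤ × ℤ | inInteriorP a n p ∧ VisiblePt p}.ncard

/-!
A lattice point `(x, y)` is interior to `P_{a,n}` exactly when `0 < y < n` and
`(x - 1) n < a y < x n`, i.e. when `x = ⌈a y / n⌉` and `n ∤ a y`. Relaxing `a y < x n` to
`a y ≤ x n` (and bounding `1 ≤ x ≤ a` instead of `0 < y < n`) adds only the lattice points
of the segment from `0` to `(a, n)`, and since `gcd(a, n) = 1` the only one of them with
`1 ≤ x ≤ a` is the vertex `(a, n)`. Counting the relaxed set by its first coordinate gives
the sum.
-/

open Finset

lemma inInteriorP_iff {a n : ℤ} (hn : 0 < n) (x y : ℤ) :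
    inInteriorP a n (x, y) ↔ 0 < y ∧ y < n ∧ (x - 1) * n < a * y ∧ a * y < x * n := by
  have hn' : (0 : ℝ) < n := by exact_mod_cast hn
  constructor
  · rintro ⟨t₁, t₂, ht₁, ht₁', ht₂, ht₂', hx, hy⟩
    have hy : (y : ℝ) = t₂ * n := hy
    have hxy : (x : ℝ) * n - a * y = t₁ * n := by rw [hy, show (x : ℝ) = _ from hx]; ring
    have h₁ : (0 : ℝ) < y := by rw [hy]; positivity
    have h₂ : (y : ℝ) < n := by rw [hy]; nlinarith
    have h₃ : ((x : ℝ) - 1) * n < a * y := by nlinarith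
    have h₄ : (a : ℝ) * y < x * n := by nlinarith [mul_pos ht₁ hn']
    exact ⟨by exact_mod_cast h₁, by exact_mod_cast h₂, by exact_mod_cast h₃, by exact_mod_cast h₄⟩
  · rintro ⟨h₁, h₂, h₃, h₄⟩
    have h₁ : (0 : ℝ) < y := by exact_mod_cast h₁
    have h₂ : (y : ℝ) < n := by exact_mod_cast h₂
    have h₃ : ((x : ℝ) - 1) * n < a * y := by exact_mod_cast h₃
    have h₄ : (a : ℝ) * y < x * n := by exact_mod_cast h₄
    refine ⟨((x : ℝ) * n - a * y) / n, (y : ℝ) / n, ?_, ?_, ?_, ?_, ?_, ?_⟩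
    · exact div_pos (by linarith) hn'
    · rw [div_lt_one hn']; linarith
    · exact div_pos h₁ hn'
    · rwa [div_lt_one hn']
    · field_simp; ring
    · field_simp

lemma eq_of_mul_eq_mul_of_isCoprime {a n x y : ℤ} (hcop : IsCoprime a n) (hx : 0 < x)
    (hxa : x ≤ a) (h : a * y = x * n) : (x, y) = (a, n) := by
  have hax : a ∣ x := hcop.dvd_of_dvd_mul_right ⟨y, by rw [h, mul_comm]⟩
  obtain rfl : x = a := le_antisymm hxa (Int.le_of_dvd hx hax)
  rw [(mul_right_inj' hx.ne').mp h]

/-- The points `(⌈a k / n⌉, k)` with `1 ≤ k ≤ n` and `gcd(⌈a k / n⌉, k) = 1`. -/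
noncomputable def visibleCeilPoints (a n : ℤ) : Finset (ℤ × ℤ) :=
  (Icc 1 a ×ˢ Icc 1 n).filter fun p =>
    (p.1 - 1) * n < a * p.2 ∧ a * p.2 ≤ p.1 * n ∧ Int.gcd p.1 p.2 = 1

lemma card_visibleCeilPoints (a n : ℤ) :
    #(visibleCeilPoints a n) = ∑ s ∈ Icc 1 a,
      #((Icc 1 n).filter fun k => (s - 1) * n < a * k ∧ a * k ≤ s * n ∧ Int.gcd s k = 1) := by
  simp only [visibleCeilPoints, card_filter, sum_product]

lemma vertex_mem_visibleCeilPoints {a n : ℤ} (ha : 0 < a) (hn : 0 < n)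
    (hgcd : Int.gcd a n = 1) : (a, n) ∈ visibleCeilPoints a n := by
  simp only [visibleCeilPoints, mem_filter, mem_product, mem_Icc]
  exact ⟨⟨⟨ha, le_rfl⟩, hn, le_rfl⟩, by nlinarith, by rw [mul_comm], hgcd⟩

lemma setOf_interior_visible_eq {a n : ℤ} (ha : 0 < a) (hn : 0 < n) (hcop : IsCoprime a n) :
    {p : ℤ × ℤ | inInteriorP a n p ∧ VisiblePt p} = ↑((visibleCeilPoints a n).erase (a, n)) := by
  ext ⟨x, y⟩
  simp only [Set.mem_ofPred_eq, coe_erase, coe_filter, visibleCeilPoints, Set.mem_sdiff,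
    Set.mem_singleton_iff, mem_product, mem_Icc, VisiblePt, inInteriorP_iff hn]
  constructor
  · rintro ⟨⟨hy, hyn, hlo, hhi⟩, hvis⟩
    refine ⟨⟨⟨⟨?_, ?_⟩, hy, hyn.le⟩, hlo, hhi.le, hvis⟩, fun h => ?_⟩
    · nlinarith
    · nlinarith
    · simp only [Prod.mk.injEq] at h
      exact hyn.ne h.2
  · rintro ⟨⟨⟨⟨hx, hxa⟩, -, -⟩, hlo, hhi, hvis⟩, hne⟩
    have hhi : a * y < x * n :=
      hhi.lt_of_ne fun h => hne (eq_of_mul_eq_mul_of_isCoprime hcop hx hxa h)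
    exact ⟨⟨by nlinarith, by nlinarith, hlo, hhi⟩, hvis⟩

lemma setOf_fiber_eq_coe_filter {a n s : ℤ} (ha : 0 < a) (hn : 0 ≤ n) (hs : s ∈ Icc 1 a) :
    {k : ℤ | (s - 1) * n < a * k ∧ a * k ≤ s * n ∧ Int.gcd s k = 1} =
      ↑((Icc 1 n).filter fun k => (s - 1) * n < a * k ∧ a * k ≤ s * n ∧ Int.gcd s k = 1) := by
  rw [mem_Icc] at hs
  ext k
  simp only [Set.mem_ofPred_eq, coe_filter, mem_Icc]
  refine ⟨fun hk => ⟨⟨?_, ?_⟩, hk⟩, And.right⟩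
  · nlinarith
  · nlinarith

/-- `V(a,n) + 1 = Σ_{s=1}^{a} #{k : (s−1)·n < a·k ≤ s·n, gcd(s,k) = 1}`. -/
theorem V_add_one_eq_sum (a n : ℤ) (ha : 1 ≤ a) (han : a < n)
    (hgcd : Int.gcd a n = 1) :
    (V a n : ℤ) + 1 =
      ∑ s ∈ Finset.Icc 1 a,
        ({k : ℤ | (s - 1) * n < a * k ∧ a * k ≤ s * n ∧ Int.gcd s k = 1}.ncard : ℤ) := by
  have ha₀ : 0 < a := by omega
  have hn : 0 < n := by omega
  have hV : V a n + 1 = #(visibleCeilPoints a n) := by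
    rw [V, setOf_interior_visible_eq ha₀ hn (Int.isCoprime_iff_gcd_eq_one.mpr hgcd),
      Set.ncard_coe_finset, card_erase_add_one (vertex_mem_visibleCeilPoints ha₀ hn hgcd)]
  rw [← Nat.cast_add_one, hV, card_visibleCeilPoints, Nat.cast_sum]
  refine sum_congr rfl fun s hs => ?_
  rw [setOf_fiber_eq_coe_filter ha₀ hn.le hs, Set.ncard_coe_finset]
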